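/- Let G be a finite abelian group with |G| = g. Define f on a neighborhood of the point x₀ = (1/g,…,1/g) ∈ ℝ^{G∖{0}} as follows: given x = (ν(a))_{a∈G∖{0}}, set ν(0) = 1 − ∑_{a≠0} ν(a), μ(a) = ∑_{b∈G} ν(b)ν(−a−b) for a ∈ G, and f(x) = ∑_{a∈G} ν(a) log(ν(a)/μ(a)). Then f(x₀) = 0, the gradient of f at x₀ is the zero vector, and the Hessian matrix of f at x₀ equals the (g−1)×(g−1) matrix Q indexed by G∖{0} with Q(a,a) = 2g on the diagonal and Q(a,b) = g off the diagonal. -/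

import Mathlib

open scoped Classical

noncomputable section

namespace CLPaper

open Matrix

/-- The matrix `B_n`: rows indexed by `[n]³`, columns by `[n]`;
the row of `(x₁,x₂,x₃)` is `e_{x₁} + e_{x₂} + e_{x₃}`. -/
def B (n : ℕ) : Matrix (Fin n × Fin n × Fin n) (Fin n) ℤ :=
  fun x j => (if x.1 = j then 1 else 0) + (if x.2.1 = j then 1 else 0) +
    (if x.2.2 = j then 1 else 0)

/-- `det (B_n[K])` for an `n`-element subset `K` of `[n]³` (rows enumerated by a fixed
bijection; the quantities we consider do not depend on this choice), `0` otherwise. -/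
def subdet (n : ℕ) (K : Finset (Fin n × Fin n × Fin n)) : ℤ :=
  if h : K.card = n then
    ((B n).submatrix
      (fun i : Fin n => ((K.equivFin.symm (Fin.cast h.symm i)) : Fin n × Fin n × Fin n))
      id).det
  else 0

/-- The cokernel `ℤ^n / (row span of the rows of `B_n` indexed by `K`)`. -/
def cokK (n : ℕ) (K : Finset (Fin n × Fin n × Fin n)) : Type :=
  (Fin n → ℤ) ⧸ Submodule.span ℤ ((fun x => B n x) '' (K : Set (Fin n × Fin n × Fin n)))

instance (n : ℕ) (K : Finset (Fin n × Fin n × Fin n)) : AddCommGroup (cokK n K) :=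
  inferInstanceAs (AddCommGroup ((Fin n → ℤ) ⧸ Submodule.span ℤ _))

/-- The `p`-Sylow subgroup of an abelian group: the subgroup of elements annihilated
by a power of `p`. -/
def sylow (p : ℕ) (A : Type*) [AddCommGroup A] : AddSubgroup A where
  carrier := {x | ∃ k : ℕ, p ^ k • x = 0}
  zero_mem' := ⟨0, by simp⟩
  add_mem' := by
    rintro x y ⟨k, hk⟩ ⟨l, hl⟩
    refine ⟨k + l, ?_⟩
    rw [smul_add, pow_add, mul_comm, ← smul_smul, hk, smul_zero, mul_comm, ← smul_smul, hl,
      smul_zero, add_zero]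
  neg_mem' := by
    rintro x ⟨k, hk⟩
    exact ⟨k, by rw [smul_neg, hk, neg_zero]⟩

/-- Number of surjective homomorphisms from `A` to `G`. -/
def numSur (A G : Type*) [AddCommGroup A] [AddCommGroup G] : ℕ :=
  Nat.card {f : A →+ G // Function.Surjective f}

variable {G : Type*} [AddCommGroup G] [Fintype G]

/-- The submatrix `B_{n,q}` of `B_n` consisting of the rows indexed by
`I_q = {(x₁,x₂,x₃) : q_{x₁} + q_{x₂} + q_{x₃} = 0}`. -/
def Bq (n : ℕ) (q : Fin n → G) :
    Matrix {x : Fin n × Fin n × Fin n // q x.1 + q x.2.1 + q x.2.2 = 0} (Fin n) ℤ :=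
  fun x j => B n x.1 j

/-- The Gram matrix `B_{n,q}ᵀ B_{n,q}`. -/
def gram (n : ℕ) (q : Fin n → G) : Matrix (Fin n) (Fin n) ℤ :=
  (Bq n q)ᵀ * Bq n q

/-- `n_a(q) = #{i : q_i = a}`. -/
def cnt {n : ℕ} (q : Fin n → G) (a : G) : ℕ :=
  (Finset.univ.filter (fun i => q i = a)).card

/-- `m_a = ∑_b n_b n_{-a-b}` associated to a counts vector `n̄ : G → ℕ`. -/
def mOf (nbar : G → ℕ) (a : G) : ℕ :=
  ∑ b : G, nbar b * nbar (-a - b)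

/-- The matrix `M` indexed by `G₊ = {a : n_a > 0}`, with
`M(a,a) = 2 n_a n_{-2a} + m_a` and `M(a,b) = 2 √(n_a n_b) n_{-a-b}` for `a ≠ b`. -/
def Mmat (nbar : G → ℕ) :
    Matrix {a : G // 0 < nbar a} {a : G // 0 < nbar a} ℝ :=
  fun a b =>
    if (a : G) = (b : G) then
      2 * (nbar (a : G) : ℝ) * (nbar (-(2 • (a : G))) : ℝ) + (mOf nbar (a : G) : ℝ)
    else
      2 * Real.sqrt ((nbar (a : G) : ℝ) * (nbar (b : G) : ℝ)) * (nbar (-(a : G) - b) : ℝ)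

/-- The set `S(n̄)` of vectors `q ∈ G^n` with the prescribed counts. -/
def Sset (n : ℕ) (nbar : G → ℕ) : Finset (Fin n → G) :=
  Finset.univ.filter (fun q => ∀ a : G, cnt q a = nbar a)

/-- `E(n̄) = ∑_{q ∈ S(n̄)} det(B_{n,q}ᵀ B_{n,q}) / (3^{n+1} n^{2n})`. -/
def Eval (n : ℕ) (nbar : G → ℕ) : ℝ :=
  (∑ q ∈ Sset n nbar, ((gram n q).det : ℝ)) / ((3 : ℝ) ^ (n + 1) * (n : ℝ) ^ (2 * n))

/-- Kullback–Leibler divergence of two probability vectors on `G` (natural log;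
terms with `ν a = 0` contribute `0`). -/
def klDiv (ν μ : G → ℝ) : ℝ :=
  ∑ a : G, if ν a = 0 then 0 else ν a * Real.log (ν a / μ a)

/-- `ν_{n̄}(a) = n_a / n`. -/
def nuOf (n : ℕ) (nbar : G → ℕ) : G → ℝ := fun a => (nbar a : ℝ) / n

/-- `μ_{n̄}(a) = m_a / n²`. -/
def muOf (n : ℕ) (nbar : G → ℕ) : G → ℝ := fun a => (mOf nbar a : ℝ) / (n : ℝ) ^ 2

/-- `t_n = 2C √(|G| n log n)`. -/
def tSeq (G : Type*) [Fintype G] (C : ℝ) (n : ℕ) : ℝ :=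
  2 * C * Real.sqrt ((Fintype.card G) * n * Real.log n)

/-- `r_n = 4C |G| log n`. -/
def rSeq (G : Type*) [Fintype G] (C : ℝ) (n : ℕ) : ℝ :=
  4 * C * (Fintype.card G) * Real.log n

/-- `n̄ ∈ D_n`: the counts sum to `n` and the support generates `G`. -/
def memD (n : ℕ) (nbar : G → ℕ) : Prop :=
  (∑ a : G, nbar a = n) ∧ AddSubgroup.closure {a : G | 0 < nbar a} = ⊤

/-- `n̄ ∈ D_n'`: moreover `m_a > 0` for all `a ∈ G₊`. -/
def memD' (n : ℕ) (nbar : G → ℕ) : Prop :=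
  memD n nbar ∧ ∀ a : G, 0 < nbar a → 0 < mOf nbar a

/-- `u_H(g) = 1/|H|` for `g ∈ H` and `0` otherwise. -/
def uH (H : AddSubgroup G) : G → ℝ :=
  fun g => if g ∈ H then (Nat.card H : ℝ)⁻¹ else 0

/-- `n̄ ∈ B(n,H)`. -/
def memB (C : ℝ) (n : ℕ) (H : AddSubgroup G) (nbar : G → ℕ) : Prop :=
  memD' n nbar ∧ (∀ a : G, |(nbar a : ℝ) - n * uH H a| ≤ tSeq G C n) ∧
    (∑ a ∈ Finset.univ.filter (fun a : G => a ∉ H), (nbar a : ℝ)) ≤ rSeq G C n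

end CLPaper

namespace CLPaper

variable (G : Type*) [AddCommGroup G] [Fintype G]

/-- The extension of `x : ℝ^{G∖{0}}` to a (signed) measure `ν` on `G` with total mass 1:
`ν(0) = 1 - ∑_{a ≠ 0} x(a)`. -/
def nuExt (x : {a : G // a ≠ 0} → ℝ) : G → ℝ :=
  fun a => if h : a = 0 then 1 - ∑ b : {a : G // a ≠ 0}, x b else x ⟨a, h⟩

/-- The function `f(x) = D(ν‖μ)` where `ν` extends `x` and `μ(a) = ∑_b ν(b)ν(-a-b)`. -/
def fKL (x : {a : G // a ≠ 0} → ℝ) : ℝ :=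
  klDiv (nuExt G x) (fun a => ∑ b : G, nuExt G x b * nuExt G x (-a - b))

end CLPaper

open CLPaper

/-!
Near `x₀` every `ν(a)` is positive, so `f = ∑ ν (log ν - log μ)` there. The map `x ↦ ν` is affine
with linear parts `Dν_a` summing to `0`, and `∑_a μ(a) = (∑_a ν(a))² = 1` identically, so
`∑_a Dμ_a = 0` and `∑_a D²μ_a = 0`. Hence `Df = ∑_a log (ν_a / μ_a) Dν_a - ∑_a (ν_a / μ_a) Dμ_a`.
At `x₀` we have `ν = μ = 1/g` and `Dμ_a = 0`, so `Df(x₀) = 0`; differentiating once more, the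
second sum contributes `∑_a D²μ_a = 0` and the first `g ∑_a Dν_a ⊗ Dν_a`, which in coordinates is
`g ((∑ u) (∑ v) + ∑ u_a v_a)`.
-/

open Filter Topology

theorem Finset.sum_sum_ite_eq_mul_add {ι R : Type*} [Fintype ι] [DecidableEq ι] [CommRing R]
    (c : R) (u v : ι → R) :
    ∑ a, ∑ b, (if a = b then 2 * c else c) * u a * v b
      = c * ((∑ a, u a) * (∑ b, v b) + ∑ a, u a * v a) := by
  have split (a b : ι) : (if a = b then 2 * c else c) * u a * v b
      = c * (u a * v b) + if a = b then c * (u a * v b) else 0 := by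
    split_ifs <;> ring
  simp only [split, Finset.sum_add_distrib, Finset.sum_ite_eq, Finset.mem_univ, if_true,
    ← Finset.mul_sum, Finset.sum_mul_sum, mul_add]

theorem Fintype.sum_comp_neg_sub_left {G M : Type*} [AddCommGroup G] [Fintype G]
    [AddCommMonoid M] (f : G → M) (b : G) : ∑ a, f (-a - b) = ∑ a, f a :=
  Fintype.sum_equiv ((Equiv.neg G).trans (Equiv.subRight b)) _ _ fun _ => rfl

theorem Fintype.sum_comp_neg_sub_right {G M : Type*} [AddCommGroup G] [Fintype G]
    [AddCommMonoid M] (f : G → M) (a : G) : ∑ b, f (-a - b) = ∑ b, f b :=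
  Fintype.sum_equiv (Equiv.subLeft (-a)) _ _ fun _ => rfl

namespace CLPaper

variable (G : Type*) [AddCommGroup G] [Fintype G]

def xUnif : {a : G // a ≠ 0} → ℝ := fun _ => (Fintype.card G : ℝ)⁻¹

def nuExtDeriv (a : G) : ({a : G // a ≠ 0} → ℝ) →L[ℝ] ℝ :=
  if h : a = 0 then -∑ b, ContinuousLinearMap.proj b else ContinuousLinearMap.proj ⟨a, h⟩

def muExt (x : {a : G // a ≠ 0} → ℝ) (a : G) : ℝ :=
  ∑ b, nuExt G x b * nuExt G x (-a - b)

def muExtDeriv (x : {a : G // a ≠ 0} → ℝ) (a : G) : ({a : G // a ≠ 0} → ℝ) →L[ℝ] ℝ :=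
  ∑ b, (nuExt G x b • nuExtDeriv G (-a - b) + nuExt G x (-a - b) • nuExtDeriv G b)

def fKLLog (x : {a : G // a ≠ 0} → ℝ) : ℝ :=
  ∑ a, nuExt G x a * (Real.log (nuExt G x a) - Real.log (muExt G x a))

def fKLDeriv (x : {a : G // a ≠ 0} → ℝ) : ({a : G // a ≠ 0} → ℝ) →L[ℝ] ℝ :=
  ∑ a, (Real.log (nuExt G x a) - Real.log (muExt G x a)) • nuExtDeriv G a -
    ∑ a, (nuExt G x a / muExt G x a) • muExtDeriv G x a

section General

variable {G}

theorem nuExt_zero_apply (x : {a : G // a ≠ 0} → ℝ) : nuExt G x 0 = 1 - ∑ b, x b := by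
  simp [nuExt]

theorem nuExt_coe_apply (x : {a : G // a ≠ 0} → ℝ) (b : {a : G // a ≠ 0}) :
    nuExt G x b = x b := by
  simp [nuExt, b.2]

theorem nuExtDeriv_zero_apply (u : {a : G // a ≠ 0} → ℝ) :
    nuExtDeriv G 0 u = -∑ b, u b := by
  simp [nuExtDeriv]

theorem nuExtDeriv_coe_apply (b : {a : G // a ≠ 0}) (u : {a : G // a ≠ 0} → ℝ) :
    nuExtDeriv G b u = u b := by
  simp [nuExtDeriv, b.2]

theorem nuExt_eq_add (x : {a : G // a ≠ 0} → ℝ) (a : G) :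
    nuExt G x a = nuExt G 0 a + nuExtDeriv G a x := by
  by_cases h : a = 0
  · subst h
    simp [nuExt, nuExtDeriv, sub_eq_add_neg]
  · simp [nuExt, nuExtDeriv, h]

theorem hasFDerivAt_nuExt (a : G) (x : {a : G // a ≠ 0} → ℝ) :
    HasFDerivAt (fun y => nuExt G y a) (nuExtDeriv G a) x := by
  rw [show (fun y => nuExt G y a) = fun y => nuExt G 0 a + nuExtDeriv G a y from
    funext fun y => nuExt_eq_add y a]
  exact (nuExtDeriv G a).hasFDerivAt.const_add _

theorem sum_nuExt (x : {a : G // a ≠ 0} → ℝ) : ∑ a, nuExt G x a = 1 := by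
  rw [Fintype.sum_eq_add_sum_subtype_ne _ 0]
  simp [nuExt_zero_apply, nuExt_coe_apply]

theorem sum_nuExtDeriv : ∑ a, nuExtDeriv G a = 0 := by
  ext u
  rw [_root_.sum_apply, Fintype.sum_eq_add_sum_subtype_ne _ 0]
  simp [nuExtDeriv_zero_apply, nuExtDeriv_coe_apply]

theorem sum_nuExtDeriv_mul (u v : {a : G // a ≠ 0} → ℝ) :
    ∑ a, nuExtDeriv G a u * nuExtDeriv G a v = (∑ b, u b) * (∑ b, v b) + ∑ b, u b * v b := by
  rw [Fintype.sum_eq_add_sum_subtype_ne _ 0]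
  simp only [nuExtDeriv_zero_apply, nuExtDeriv_coe_apply, neg_mul_neg]

theorem hasFDerivAt_muExt (x : {a : G // a ≠ 0} → ℝ) (a : G) :
    HasFDerivAt (fun y => muExt G y a) (muExtDeriv G x a) x :=
  HasFDerivAt.fun_sum fun b _ => (hasFDerivAt_nuExt b x).mul (hasFDerivAt_nuExt (-a - b) x)

theorem sum_muExt (x : {a : G // a ≠ 0} → ℝ) : ∑ a, muExt G x a = 1 := by
  simp only [muExt]
  rw [Finset.sum_comm]
  simp only [← Finset.mul_sum, Fintype.sum_comp_neg_sub_left (nuExt G x), sum_nuExt, mul_one]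

theorem sum_muExtDeriv (x : {a : G // a ≠ 0} → ℝ) : ∑ a, muExtDeriv G x a = 0 := by
  have h := HasFDerivAt.fun_sum (u := Finset.univ) fun a _ => hasFDerivAt_muExt x a
  simp only [sum_muExt] at h
  exact h.unique (hasFDerivAt_const 1 x)

theorem differentiableAt_muExtDeriv (x : {a : G // a ≠ 0} → ℝ) (a : G) :
    DifferentiableAt ℝ (fun y => muExtDeriv G y a) x :=
  DifferentiableAt.fun_sum fun b _ =>
    ((hasFDerivAt_nuExt b x).differentiableAt.smul_const _).add
      ((hasFDerivAt_nuExt (-a - b) x).differentiableAt.smul_const _)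

theorem sum_fderiv_muExtDeriv (x : {a : G // a ≠ 0} → ℝ) :
    ∑ a, fderiv ℝ (fun y => muExtDeriv G y a) x = 0 := by
  rw [← fderiv_fun_sum fun a _ => differentiableAt_muExtDeriv x a]
  simp only [sum_muExtDeriv, fderiv_const_apply]

theorem muExt_pos {x : {a : G // a ≠ 0} → ℝ} (hx : ∀ a, 0 < nuExt G x a) (a : G) :
    0 < muExt G x a :=
  Finset.sum_pos (fun b _ => mul_pos (hx b) (hx _)) Finset.univ_nonempty

theorem fKL_eq_fKLLog {x : {a : G // a ≠ 0} → ℝ} (hx : ∀ a, 0 < nuExt G x a) :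
    fKL G x = fKLLog G x :=
  Finset.sum_congr rfl fun a _ => by
    rw [if_neg (hx a).ne']
    exact congrArg _ (Real.log_div (hx a).ne' (muExt_pos hx a).ne')

theorem hasFDerivAt_fKLLog {x : {a : G // a ≠ 0} → ℝ} (hx : ∀ a, 0 < nuExt G x a) :
    HasFDerivAt (fKLLog G) (fKLDeriv G x) x := by
  have hterm (a : G) := (hasFDerivAt_nuExt a x).fun_mul
    (((hasFDerivAt_nuExt a x).log (hx a).ne').fun_sub
      ((hasFDerivAt_muExt x a).log (muExt_pos hx a).ne'))
  refine (HasFDerivAt.fun_sum fun a _ => hterm a).congr_fderiv ?_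
  have hterm_eq (a : G) : nuExt G x a • ((nuExt G x a)⁻¹ • nuExtDeriv G a -
        (muExt G x a)⁻¹ • muExtDeriv G x a) +
      (Real.log (nuExt G x a) - Real.log (muExt G x a)) • nuExtDeriv G a
      = nuExtDeriv G a + ((Real.log (nuExt G x a) - Real.log (muExt G x a)) • nuExtDeriv G a -
        (nuExt G x a / muExt G x a) • muExtDeriv G x a) := by
    rw [smul_sub, smul_smul, smul_smul, mul_inv_cancel₀ (hx a).ne', one_smul, div_eq_mul_inv]
    abel
  simp only [hterm_eq, Finset.sum_add_distrib, sum_nuExtDeriv, zero_add, Finset.sum_sub_distrib,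
    fKLDeriv]

theorem eventually_nuExt_pos {x : {a : G // a ≠ 0} → ℝ} (hx : ∀ a, 0 < nuExt G x a) :
    ∀ᶠ y in 𝓝 x, ∀ a, 0 < nuExt G y a :=
  eventually_all.mpr fun a =>
    (hasFDerivAt_nuExt a x).continuousAt.eventually (eventually_gt_nhds (hx a))

theorem fKL_eventuallyEq {x : {a : G // a ≠ 0} → ℝ} (hx : ∀ a, 0 < nuExt G x a) :
    fKL G =ᶠ[𝓝 x] fKLLog G :=
  (eventually_nuExt_pos hx).mono fun _ => fKL_eq_fKLLog

theorem fderiv_fKL_eventuallyEq {x : {a : G // a ≠ 0} → ℝ} (hx : ∀ a, 0 < nuExt G x a) :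
    fderiv ℝ (fKL G) =ᶠ[𝓝 x] fKLDeriv G :=
  (fKL_eventuallyEq hx).fderiv.trans <|
    (eventually_nuExt_pos hx).mono fun _ hy => (hasFDerivAt_fKLLog hy).fderiv

end General

theorem nuExt_xUnif (a : G) : nuExt G (xUnif G) a = (Fintype.card G : ℝ)⁻¹ := by
  have hsum : ∑ _ : G, (Fintype.card G : ℝ)⁻¹ = 1 := by
    simp [Finset.card_univ]
  by_cases h : a = 0
  · rw [Fintype.sum_eq_add_sum_subtype_ne _ 0] at hsum
    rw [h, nuExt_zero_apply]
    unfold xUnif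
    linarith
  · exact nuExt_coe_apply _ ⟨a, h⟩

theorem nuExt_xUnif_pos (a : G) : 0 < nuExt G (xUnif G) a := by
  rw [nuExt_xUnif]
  positivity

theorem muExt_xUnif (a : G) : muExt G (xUnif G) a = (Fintype.card G : ℝ)⁻¹ := by
  simp [muExt, nuExt_xUnif, Finset.card_univ]

theorem muExtDeriv_xUnif (a : G) : muExtDeriv G (xUnif G) a = 0 := by
  simp only [muExtDeriv, nuExt_xUnif, Finset.sum_add_distrib, ← Finset.smul_sum,
    Fintype.sum_comp_neg_sub_right (nuExtDeriv G), sum_nuExtDeriv, smul_zero, add_zero]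

theorem hasFDerivAt_sum_logRatio_smul_xUnif :
    HasFDerivAt (fun y => ∑ a, (Real.log (nuExt G y a) - Real.log (muExt G y a)) • nuExtDeriv G a)
      (∑ a, ((Fintype.card G : ℝ) • nuExtDeriv G a).smulRight (nuExtDeriv G a)) (xUnif G) := by
  refine (HasFDerivAt.fun_sum fun a _ =>
    (((hasFDerivAt_nuExt a _).log (nuExt_xUnif_pos G a).ne').fun_sub
      ((hasFDerivAt_muExt _ a).log (muExt_pos (nuExt_xUnif_pos G) a).ne')).smul_const
      (nuExtDeriv G a)).congr_fderiv ?_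
  simp only [nuExt_xUnif, muExt_xUnif, muExtDeriv_xUnif, inv_inv, smul_zero, sub_zero]

theorem hasFDerivAt_sum_ratio_smul_muExtDeriv_xUnif :
    HasFDerivAt (𝕜 := ℝ) (fun y => ∑ a, (nuExt G y a / muExt G y a) • muExtDeriv G y a) 0
      (xUnif G) := by
  have hratio (a : G) : DifferentiableAt ℝ (fun y => nuExt G y a / muExt G y a) (xUnif G) := by
    simpa only [div_eq_mul_inv] using (hasFDerivAt_nuExt a (xUnif G)).differentiableAt.fun_mul
      ((hasFDerivAt_muExt (xUnif G) a).differentiableAt.fun_inv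
        (muExt_pos (nuExt_xUnif_pos G) a).ne')
  refine (HasFDerivAt.fun_sum fun a _ =>
    (hratio a).hasFDerivAt.smul (differentiableAt_muExtDeriv _ a).hasFDerivAt).congr_fderiv ?_
  have hg : (Fintype.card G : ℝ)⁻¹ ≠ 0 := by positivity
  simp only [nuExt_xUnif, muExt_xUnif, muExtDeriv_xUnif, div_self hg, one_smul,
    ContinuousLinearMap.smulRight_zero, add_zero, sum_fderiv_muExtDeriv]

theorem hasFDerivAt_fKLDeriv_xUnif :
    HasFDerivAt (fKLDeriv G)
      (∑ a, ((Fintype.card G : ℝ) • nuExtDeriv G a).smulRight (nuExtDeriv G a)) (xUnif G) := by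
  have h := (hasFDerivAt_sum_logRatio_smul_xUnif G).fun_sub
    (hasFDerivAt_sum_ratio_smul_muExtDeriv_xUnif G)
  rw [sub_zero] at h
  exact h

end CLPaper

/-- **Lemma (derivatives of the KL divergence).** At `x₀ = (1/g,…,1/g)` one has
`f(x₀) = 0`, the derivative of `f` at `x₀` vanishes, and the Hessian of `f` at `x₀`
is the matrix `Q` with `Q(a,a) = 2g` and `Q(a,b) = g` for `a ≠ b`. -/
theorem fKL_derivatives (G : Type*) [AddCommGroup G] [Fintype G] :
    fKL G (fun _ => (Fintype.card G : ℝ)⁻¹) = 0 ∧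
    fderiv ℝ (fKL G) (fun _ => (Fintype.card G : ℝ)⁻¹) = 0 ∧
    (∀ u v : {a : G // a ≠ 0} → ℝ,
      (fderiv ℝ (fderiv ℝ (fKL G)) (fun _ => (Fintype.card G : ℝ)⁻¹)) u v
        = ∑ a : {a : G // a ≠ 0}, ∑ b : {a : G // a ≠ 0},
            (if a = b then 2 * (Fintype.card G : ℝ) else (Fintype.card G : ℝ)) *
              u a * v b) := by
  rw [show (fun _ => (Fintype.card G : ℝ)⁻¹) = xUnif G from rfl]
  have hpos := nuExt_xUnif_pos G
  refine ⟨?_, ?_, fun u v => ?_⟩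
  · rw [fKL_eq_fKLLog hpos]
    simp [fKLLog, nuExt_xUnif, muExt_xUnif]
  · rw [(fderiv_fKL_eventuallyEq hpos).eq_of_nhds]
    simp [fKLDeriv, nuExt_xUnif, muExt_xUnif, muExtDeriv_xUnif]
  · rw [(fderiv_fKL_eventuallyEq hpos).fderiv_eq, (hasFDerivAt_fKLDeriv_xUnif G).fderiv,
      Finset.sum_sum_ite_eq_mul_add]
    simp [← Finset.mul_sum, sum_nuExtDeriv_mul, mul_assoc]
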